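/- arXiv:1606.00700 — 2 statements merged into one kernel-verified Lean document; each statement's English description precedes it below -/
import Mathlib

section
/- Let 1 < p < ∞ and 1 < θ < ∞, and let D_n(x) = 1/2 + Σ_{k=1}^n e^{ikx} be the Dirichlet kernel on [0,2π]. Then the Lorentz norm ‖D_n‖_{p,θ} satisfies ‖D_n‖_{p,θ} ≍ n^{1 - 1/p}, with implied constants independent of n. -/
open scoped BigOperators ENNReal
open MeasureTheory Real Set

noncomputable section

/-- Iterated mixed sequence norm: `ℓ_{τ_1}` in the first index, then `ℓ_{τ_2}`, etc. -/
def mixedSeqNorm : (m : ℕ) → (Fin m → ℝ) → ((Fin m → ℕ) → ℝ) → ℝ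
  | 0, _, a => |a (fun i => i.elim0)|
  | m + 1, τ, a =>
      mixedSeqNorm m (fun j => τ j.succ)
        (fun s => (∑' k : ℕ, |a (Fin.cons k s)| ^ (τ 0)) ^ (1 / τ 0))

/-- `(2^{-s_1},...,2^{-s_m})`. -/
def negTwoPow {m : ℕ} (s : Fin m → ℕ) : Fin m → ℝ := fun j => (2 : ℝ) ^ (-(s j : ℝ))

/-- `Γ(Ω,N) = { s : Ω(2^{-s}) ≥ 1/N }`. -/
def Gam {m : ℕ} (Ω : (Fin m → ℝ) → ℝ) (N : ℝ) : Set (Fin m → ℕ) :=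
  {s | 1 / N ≤ Ω (negTwoPow s)}

/-- `Γ^⊥(Ω,N)`, the complement of `Γ(Ω,N)` in `ℤ_+^m`. -/
def GamPerp {m : ℕ} (Ω : (Fin m → ℝ) → ℝ) (N : ℝ) : Set (Fin m → ℕ) :=
  (Gam Ω N)ᶜ

/-- `Λ(Ω,N) = Γ^⊥(Ω,N) \ Γ^⊥(Ω,2^l N)`. -/
def Lam {m : ℕ} (Ω : (Fin m → ℝ) → ℝ) (l : ℕ) (N : ℝ) : Set (Fin m → ℕ) :=
  GamPerp Ω N \ GamPerp Ω (2 ^ l * N)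

/-- A function of mixed modulus-of-continuity type of order `l`. -/
structure IsMixedModulus {m : ℕ} (l : ℕ) (Ω : (Fin m → ℝ) → ℝ) : Prop where
  pos : ∀ t : Fin m → ℝ, (∀ j, 0 < t j) → 0 < Ω t
  zero : ∀ t : Fin m → ℝ, (∃ j, t j = 0) → Ω t = 0
  mono : ∀ t₁ t₂ : Fin m → ℝ, (∀ j, t₁ j ≤ t₂ j) → Ω t₁ ≤ Ω t₂
  submul : ∀ (k : Fin m → ℕ) (t : Fin m → ℝ), (∀ j, 1 ≤ k j) →
      Ω (fun j => (k j : ℝ) * t j) ≤ (∏ j, (k j : ℝ)) ^ l * Ω t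
  cont : ContinuousOn Ω {t | ∀ j, 0 < t j}

/-- `t^{-α_j} Ω` almost increases in each variable on `(0,1]^m`. -/
def AlmostIncrOn {m : ℕ} (Ω : (Fin m → ℝ) → ℝ) (α : Fin m → ℝ) : Prop :=
  ∀ j, ∃ C : ℝ, 1 ≤ C ∧ ∀ t : Fin m → ℝ, (∀ i, t i ∈ Set.Ioc (0:ℝ) 1) →
    ∀ t₁ t₂ : ℝ, t₁ ∈ Set.Ioc (0:ℝ) 1 → t₂ ∈ Set.Ioc (0:ℝ) 1 → t₁ ≤ t₂ →
      t₁ ^ (-(α j)) * Ω (Function.update t j t₁) ≤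
        C * (t₂ ^ (-(α j)) * Ω (Function.update t j t₂))

/-- `t^{-α_j} Ω` almost decreases in each variable on `(0,1]^m`. -/
def AlmostDecrOn {m : ℕ} (Ω : (Fin m → ℝ) → ℝ) (α : Fin m → ℝ) : Prop :=
  ∀ j, ∃ C : ℝ, 1 ≤ C ∧ ∀ t : Fin m → ℝ, (∀ i, t i ∈ Set.Ioc (0:ℝ) 1) →
    ∀ t₁ t₂ : ℝ, t₁ ∈ Set.Ioc (0:ℝ) 1 → t₂ ∈ Set.Ioc (0:ℝ) 1 → t₁ ≤ t₂ →
      t₂ ^ (-(α j)) * Ω (Function.update t j t₂) ≤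
        C * (t₁ ^ (-(α j)) * Ω (Function.update t j t₁))

/-- Condition (S). -/
def CondS {m : ℕ} (Ω : (Fin m → ℝ) → ℝ) : Prop :=
  ∃ α : Fin m → ℝ, (∀ j, α j ∈ Set.Ioo (0:ℝ) 1) ∧ AlmostIncrOn Ω α

/-- Condition (S_l). -/
def CondSl {m : ℕ} (l : ℕ) (Ω : (Fin m → ℝ) → ℝ) : Prop :=
  ∃ α : Fin m → ℝ, (∀ j, α j ∈ Set.Ioo (0:ℝ) (l : ℝ)) ∧ AlmostDecrOn Ω α

/-- The fundamental cube `(0, 2π]^m`. -/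
def cube (m : ℕ) : Set (Fin m → ℝ) := Set.univ.pi fun _ => Set.Ioc 0 (2 * π)

/-- `e^{i⟨k,x⟩}`. -/
def expk {m : ℕ} (k : Fin m → ℤ) (x : Fin m → ℝ) : ℂ :=
  Complex.exp (Complex.I * ∑ j, (k j : ℂ) * (x j : ℂ))

/-- Fourier coefficient of a `2π`-periodic function of `m` variables. -/
def fCoeff {m : ℕ} (f : (Fin m → ℝ) → ℂ) (n : Fin m → ℤ) : ℂ :=
  ((1 / (2 * π)) ^ m : ℝ) * ∫ x in cube m, f x * Complex.exp (-(Complex.I * ∑ j, (n j : ℂ) * (x j : ℂ)))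

/-- The dyadic block `ρ(s) = { k : 2^{s_j-1} ≤ |k_j| < 2^{s_j} }`. -/
def rho {m : ℕ} (s : Fin m → ℕ) : Set (Fin m → ℤ) :=
  {k | ∀ j, 2 ^ (s j - 1) ≤ (k j).natAbs ∧ (k j).natAbs < 2 ^ (s j)}

/-- The dyadic block of the Fourier series of `f`. -/
def deltaBlock {m : ℕ} (f : (Fin m → ℝ) → ℂ) (s : Fin m → ℕ) : (Fin m → ℝ) → ℂ :=
  fun x => ∑' k : rho s, fCoeff f k.1 * expk k.1 x

/-- `Q(Ω,N) = ⋃_{s ∈ Γ(Ω,N)} ρ(s)`. -/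
def QSet {m : ℕ} (Ω : (Fin m → ℝ) → ℝ) (N : ℝ) : Set (Fin m → ℤ) :=
  ⋃ s ∈ Gam Ω N, rho s

/-- The partial Fourier sum over a set of frequencies. -/
def partialSum {m : ℕ} (E : Set (Fin m → ℤ)) (f : (Fin m → ℝ) → ℂ) : (Fin m → ℝ) → ℂ :=
  fun x => ∑' k : E, fCoeff f k.1 * expk k.1 x

/-- Non-increasing rearrangement of `|g|` on `[0,2π]`. -/
def rearr (g : ℝ → ℂ) (t : ℝ) : ℝ :=
  sInf {y : ℝ | 0 ≤ y ∧ (volume {x ∈ Set.Ioc (0:ℝ) (2 * π) | y < ‖g x‖}).toReal ≤ t}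

/-- One-variable Lorentz norm. -/
def lorentzNorm (p θ : ℝ) (g : ℝ → ℂ) : ℝ :=
  (∫ t in Set.Ioc (0:ℝ) (2 * π), rearr g t ^ θ * t ^ (θ / p - 1)) ^ (1 / θ)

/-- Lorentz mixed norm: one-variable Lorentz norm iterated over the variables. -/
def mixedLorentz : (m : ℕ) → (Fin m → ℝ) → (Fin m → ℝ) → ((Fin m → ℝ) → ℂ) → ℝ
  | 0, _, _, f => ‖f (fun i => i.elim0)‖
  | m + 1, p, θ, f =>
      mixedLorentz m (fun j => p j.succ) (fun j => θ j.succ)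
        (fun x => ((lorentzNorm (p 0) (θ 0) (fun t => f (Fin.cons t x)) : ℝ) : ℂ))

/-- Lebesgue mixed norm. -/
def mixedLp : (m : ℕ) → (Fin m → ℝ) → ((Fin m → ℝ) → ℂ) → ℝ
  | 0, _, f => ‖f (fun i => i.elim0)‖
  | m + 1, p, f =>
      mixedLp m (fun j => p j.succ)
        (fun x => (((∫ t in Set.Ioc (0:ℝ) (2 * π),
            ‖f (Fin.cons t x)‖ ^ (p 0)) ^ (1 / p 0) : ℝ) : ℂ))

/-- `2π`-periodicity in each variable. -/
def PeriodicAll {m : ℕ} (f : (Fin m → ℝ) → ℂ) : Prop :=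
  ∀ (x : Fin m → ℝ) (j : Fin m), f (Function.update x j (x j + 2 * π)) = f x

/-- Zero mean in each variable. -/
def ZeroMeanAll {m : ℕ} (f : (Fin m → ℝ) → ℂ) : Prop :=
  ∀ (x : Fin m → ℝ) (j : Fin m),
    (∫ t in Set.Ioc (0:ℝ) (2 * π), f (Function.update x j t)) = 0

/-- Membership in the generalized Nikol'skii–Besov class with mixed Lebesgue norm. -/
def InBesovLp {m : ℕ} (Ω : (Fin m → ℝ) → ℝ) (p τ : Fin m → ℝ)
    (f : (Fin m → ℝ) → ℂ) : Prop :=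
  Measurable f ∧ PeriodicAll f ∧ ZeroMeanAll f ∧ IntegrableOn f (cube m) ∧
    mixedSeqNorm m τ (fun s => (Ω (negTwoPow s))⁻¹ * mixedLp m p (deltaBlock f s)) ≤ 1

/-- Membership in the generalized Nikol'skii–Besov class with Lorentz mixed norm. -/
def InBesovLorentz {m : ℕ} (Ω : (Fin m → ℝ) → ℝ) (p θ τ : Fin m → ℝ)
    (f : (Fin m → ℝ) → ℂ) : Prop :=
  Measurable f ∧ PeriodicAll f ∧ ZeroMeanAll f ∧ IntegrableOn f (cube m) ∧
    mixedSeqNorm m τ (fun s => (Ω (negTwoPow s))⁻¹ * mixedLorentz m p θ (deltaBlock f s)) ≤ 1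

end


section Stmt6Helpers

open MeasureTheory Real Set

private lemma stmt6_exp_ne_one (x : ℝ) (hx : x ∈ Set.Ioo (0:ℝ) (2*π)) :
    Complex.exp (Complex.I * x) ≠ 1 := by
  intro h
  rw [Complex.exp_eq_one_iff] at h
  obtain ⟨m, hm⟩ := h
  have him := congrArg Complex.im hm
  simp [Complex.mul_im, Complex.mul_re] at him
  have hpi := Real.pi_pos
  have hx1 := hx.1; have hx2 := hx.2
  rw [him] at hx1 hx2
  have hm0 : (0:ℝ) < (m:ℝ) := by nlinarith
  have hm1 : (m:ℝ) < 1 := by nlinarith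
  have h0 : (0:ℤ) < m := by exact_mod_cast hm0
  have h1 : m < 1 := by exact_mod_cast hm1
  omega

private lemma stmt6_abs_exp_sub_one_ge (x : ℝ) (hx : x ∈ Set.Ioo (0:ℝ) (2*π)) :
    2/π * min x (2*π - x) ≤ ‖Complex.exp (Complex.I * x) - 1‖ := by
  have hpi := Real.pi_pos
  have hx1 := hx.1; have hx2 := hx.2
  have hsq : ‖Complex.exp (Complex.I * x) - 1‖ ^ 2 = 2 - 2 * Real.cos x := by
    rw [Complex.sq_norm, Complex.normSq_apply]
    have hco : Complex.I * (x:ℂ) = (x:ℂ) * Complex.I := mul_comm _ _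
    rw [hco]
    simp [Complex.exp_ofReal_mul_I_re, Complex.exp_ofReal_mul_I_im]
    nlinarith [Real.sin_sq_add_cos_sq x]
  set m := min x (2*π - x) with hm
  have hm0 : 0 ≤ m := le_min hx1.le (by linarith)
  have hcos : Real.cos x ≤ 1 - 2/π^2 * m^2 := by
    rcases le_or_gt x π with h | h
    · have h1 : Real.cos x ≤ 1 - 2/π^2 * x^2 :=
        Real.cos_le_one_sub_mul_cos_sq (by rw [abs_of_pos hx1]; exact h)
      have hmx : m ≤ x := min_le_left _ _
      have : 2/π^2 * m^2 ≤ 2/π^2 * x^2 := by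
        apply mul_le_mul_of_nonneg_left _ (by positivity)
        nlinarith
      linarith
    · have hx2' : Real.cos x = Real.cos (x - 2*π) := (Real.cos_sub_two_pi x).symm
      have habs : |x - 2*π| = 2*π - x := by rw [abs_of_neg (by linarith)]; ring
      have h1 : Real.cos (x-2*π) ≤ 1 - 2/π^2 * (x-2*π)^2 :=
        Real.cos_le_one_sub_mul_cos_sq (by rw [habs]; linarith)
      have hmx : m ≤ 2*π - x := min_le_right _ _
      have : 2/π^2 * m^2 ≤ 2/π^2 * (x-2*π)^2 := by
        apply mul_le_mul_of_nonneg_left _ (by positivity)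
        nlinarith
      linarith
  have h2 : (2/π * m)^2 ≤ ‖Complex.exp (Complex.I * x) - 1‖ ^ 2 := by
    have hid : (2/π*m)^2 = 2*(2/π^2*m^2) := by field_simp
    rw [hsq, hid]; linarith
  have ha : 0 ≤ ‖Complex.exp (Complex.I * x) - 1‖ := norm_nonneg _
  nlinarith

private lemma stmt6_absD_le (n : ℕ) (x : ℝ) :
    ‖1 / 2 + ∑ k ∈ Finset.Icc 1 n, Complex.exp (Complex.I * (k : ℂ) * (x : ℂ))‖
      ≤ (n : ℝ) + 1/2 := by
  calc ‖1 / 2 + ∑ k ∈ Finset.Icc 1 n, Complex.exp (Complex.I * (k : ℂ) * (x : ℂ))‖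
      ≤ ‖(1/2 : ℂ)‖ + ‖∑ k ∈ Finset.Icc 1 n, Complex.exp (Complex.I * (k : ℂ) * (x : ℂ))‖ := norm_add_le _ _
    _ ≤ 1/2 + ∑ k ∈ Finset.Icc 1 n, ‖Complex.exp (Complex.I * (k : ℂ) * (x : ℂ))‖ := by
        gcongr
        · simp
        · exact norm_sum_le _ _
    _ = 1/2 + ∑ k ∈ Finset.Icc 1 n, 1 := by
        congr 1
        apply Finset.sum_congr rfl
        intro k _
        rw [Complex.norm_exp]
        norm_num [Complex.mul_re]
    _ ≤ (n:ℝ) + 1/2 := by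
        rw [Finset.sum_const, Nat.card_Icc, nsmul_eq_mul]
        simp; try linarith

private lemma stmt6_absD_ge (n : ℕ) (hn : 1 ≤ n) (x : ℝ) (hx : x ∈ Set.Ioc (0:ℝ) (1/(2*n))) :
    7/8 * (n:ℝ) ≤ ‖1 / 2 +
      ∑ k ∈ Finset.Icc 1 n, Complex.exp (Complex.I * (k : ℂ) * (x : ℂ))‖ := by
  have hre : ((1 / 2 : ℂ) + ∑ k ∈ Finset.Icc 1 n, Complex.exp (Complex.I * (k : ℂ) * (x : ℂ))).re
      = 1/2 + ∑ k ∈ Finset.Icc 1 n, Real.cos (k * x) := by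
    rw [Complex.add_re, Complex.re_sum]
    norm_num
    apply Finset.sum_congr rfl
    intro k _
    have : Complex.I * (k : ℂ) * (x : ℂ) = ((k * x : ℝ) : ℂ) * Complex.I := by
      push_cast; ring
    rw [this, Complex.exp_ofReal_mul_I_re]
  have hnpos : (0:ℝ) < n := by exact_mod_cast hn
  have key : ∀ k ∈ Finset.Icc 1 n, 7/8 ≤ Real.cos (k * x) := by
    intro k hk
    simp only [Finset.mem_Icc] at hk
    have hk2 : (k:ℝ) ≤ n := by exact_mod_cast hk.2
    have hkx0 : 0 ≤ (k:ℝ) * x := mul_nonneg (Nat.cast_nonneg k) hx.1.le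
    have hkx : (k:ℝ) * x ≤ 1/2 := by
      calc (k:ℝ) * x ≤ (n:ℝ) * (1/(2*n)) := by
            apply mul_le_mul hk2 hx.2 hx.1.le hnpos.le
        _ = 1/2 := by field_simp
    have := Real.one_sub_sq_div_two_le_cos (x := (k:ℝ) * x)
    nlinarith
  have h1 : 7/8 * (n:ℝ) ≤ ((1 / 2 : ℂ) +
      ∑ k ∈ Finset.Icc 1 n, Complex.exp (Complex.I * (k : ℂ) * (x : ℂ))).re := by
    rw [hre]
    have : ∑ k ∈ Finset.Icc 1 n, (7/8 : ℝ) ≤ ∑ k ∈ Finset.Icc 1 n, Real.cos (k * x) :=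
      Finset.sum_le_sum key
    rw [Finset.sum_const, Nat.card_Icc, nsmul_eq_mul] at this
    simp at this
    linarith
  exact h1.trans (Complex.re_le_norm _)

private lemma stmt6_absD_le_inv (n : ℕ) (x : ℝ) (hx : x ∈ Set.Ioo (0:ℝ) (2*π)) :
    ‖1 / 2 + ∑ k ∈ Finset.Icc 1 n, Complex.exp (Complex.I * (k : ℂ) * (x : ℂ))‖
      ≤ 3/2 + π / min x (2*π - x) := by
  have hpi := Real.pi_pos
  have hx1 := hx.1; have hx2 := hx.2
  set z := Complex.exp (Complex.I * x) with hz
  have hzk : ∀ k : ℕ, Complex.exp (Complex.I * (k : ℂ) * (x : ℂ)) = z ^ k := by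
    intro k
    rw [hz, ← Complex.exp_nat_mul]
    congr 1; ring
  have hz1 : z ≠ 1 := stmt6_exp_ne_one x hx
  have habsz : ‖z‖ = 1 := by
    rw [hz, Complex.norm_exp]; norm_num [Complex.mul_re]
  have hzpos : 0 < ‖z - 1‖ := by
    rw [norm_pos_iff]; exact sub_ne_zero.mpr hz1
  have hsum : ∑ k ∈ Finset.Icc 1 n, Complex.exp (Complex.I * (k : ℂ) * (x : ℂ))
      = (z ^ (n+1) - 1) / (z - 1) - 1 := by
    simp_rw [hzk]
    have heq : Finset.Icc 1 n = Finset.Ico 1 (n+1) := by rw [Finset.Ico_add_one_right_eq_Icc]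
    rw [heq, Finset.sum_Ico_eq_sub _ (Nat.le_add_left 1 n), geom_sum_eq hz1]
    simp
  have hnum : ‖z ^ (n+1) - 1‖ ≤ 2 := by
    have h1 := norm_sub_le (z ^ (n+1)) 1
    rw [norm_pow, habsz, one_pow, norm_one] at h1
    linarith
  have hb : ‖(z ^ (n+1) - 1) / (z - 1)‖ ≤ 2 / ‖z - 1‖ := by
    rw [norm_div]
    gcongr
  set m := min x (2*π - x) with hm
  have hm0 : 0 < m := lt_min hx1 (by linarith)
  have hzlow : 2/π * m ≤ ‖z - 1‖ := stmt6_abs_exp_sub_one_ge x hx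
  have hlow0 : 0 < 2/π * m := by positivity
  have hdiv : 2 / ‖z - 1‖ ≤ π / m := by
    have h1 : 2 / ‖z - 1‖ ≤ 2 / (2/π * m) := by gcongr
    have h2 : 2 / (2/π * m) = π / m := by field_simp
    linarith [h1, h2.le]
  calc ‖1 / 2 + ∑ k ∈ Finset.Icc 1 n, Complex.exp (Complex.I * (k : ℂ) * (x : ℂ))‖
      ≤ ‖(1/2 : ℂ)‖ + ‖∑ k ∈ Finset.Icc 1 n, Complex.exp (Complex.I * (k : ℂ) * (x : ℂ))‖ := norm_add_le _ _
    _ ≤ 1/2 + (2 / ‖z - 1‖ + 1) := by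
        gcongr
        · simp
        · rw [hsum]
          calc ‖(z ^ (n+1) - 1) / (z - 1) - 1‖
              ≤ ‖(z ^ (n+1) - 1) / (z - 1)‖ + ‖(1:ℂ)‖ := by
                have := norm_sub_le ((z ^ (n+1) - 1) / (z - 1)) 1
                simpa using this
            _ ≤ 2 / ‖z - 1‖ + 1 := by rw [norm_one]; gcongr
    _ ≤ 3/2 + π / m := by linarith

section RearrLemmas

variable {g : ℝ → ℂ} {M : ℝ}

private lemma stmt6_rearr_set_bddBelow (t : ℝ) : BddBelow
    {y : ℝ | 0 ≤ y ∧ (volume {x ∈ Set.Ioc (0:ℝ) (2 * π) | y < ‖g x‖}).toReal ≤ t} :=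
  ⟨0, fun _ h => h.1⟩

private lemma stmt6_M_mem (hM : 0 ≤ M) (hg : ∀ x, ‖g x‖ ≤ M) {t : ℝ} (ht : 0 ≤ t) :
    M ∈ {y : ℝ | 0 ≤ y ∧ (volume {x ∈ Set.Ioc (0:ℝ) (2 * π) | y < ‖g x‖}).toReal ≤ t} := by
  refine ⟨hM, ?_⟩
  have : {x ∈ Set.Ioc (0:ℝ) (2 * π) | M < ‖g x‖} = ∅ := by
    ext x; simp only [mem_sep_iff, mem_empty_iff_false, iff_false, not_and, not_lt]
    exact fun _ => hg x
  rw [this]; simp [ht]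

private lemma stmt6_rearr_nonneg (t : ℝ) : 0 ≤ rearr g t :=
  Real.sInf_nonneg fun _ h => h.1

private lemma stmt6_rearr_le {t : ℝ} {y : ℝ} (hy : 0 ≤ y)
    (hμ : (volume {x ∈ Set.Ioc (0:ℝ) (2 * π) | y < ‖g x‖}).toReal ≤ t) :
    rearr g t ≤ y :=
  csInf_le (stmt6_rearr_set_bddBelow t) ⟨hy, hμ⟩

private lemma stmt6_rearr_le_M (hM : 0 ≤ M) (hg : ∀ x, ‖g x‖ ≤ M) {t : ℝ} (ht : 0 ≤ t) :
    rearr g t ≤ M :=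
  csInf_le (stmt6_rearr_set_bddBelow t) (stmt6_M_mem hM hg ht)

private lemma stmt6_rearr_ge (hM : 0 ≤ M) (hg : ∀ x, ‖g x‖ ≤ M) {t c : ℝ} (ht : 0 ≤ t)
    (hc : ∀ y, 0 ≤ y → (volume {x ∈ Set.Ioc (0:ℝ) (2 * π) | y < ‖g x‖}).toReal ≤ t → c ≤ y) :
    c ≤ rearr g t := by
  apply le_csInf ⟨M, stmt6_M_mem hM hg ht⟩
  intro y hy
  exact hc y hy.1 hy.2

private lemma stmt6_rearr_aemeasurable (hM : 0 ≤ M) (hg : ∀ x, ‖g x‖ ≤ M) :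
    AEMeasurable (rearr g) (volume.restrict (Set.Ioc (0:ℝ) (2*π))) := by
  have hanti : Antitone (fun t => rearr g (max t 0)) := by
    intro t₁ t₂ h
    apply csInf_le_csInf (stmt6_rearr_set_bddBelow _) ⟨M, stmt6_M_mem hM hg (le_max_right _ _)⟩
    intro y hy
    exact ⟨hy.1, hy.2.trans (max_le_max h le_rfl)⟩
  have hmeas := hanti.measurable
  apply hmeas.aemeasurable.congr
  apply (ae_restrict_iff' measurableSet_Ioc).2
  filter_upwards with t ht
  simp [max_eq_left ht.1.le]

private lemma stmt6_mu_upper (hg : ∀ x ∈ Set.Ioo (0:ℝ) (2*π),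
      ‖g x‖ ≤ 3/2 + π / min x (2*π - x))
    {y : ℝ} (hy : 3/2 < y) :
    (volume {x ∈ Set.Ioc (0:ℝ) (2 * π) | y < ‖g x‖}).toReal
      ≤ 2 * (π / (y - 3/2)) := by
  have hpi := Real.pi_pos
  set b := π / (y - 3/2) with hb
  have hb0 : 0 < b := div_pos hpi (by linarith)
  have hsub : {x ∈ Set.Ioc (0:ℝ) (2 * π) | y < ‖g x‖}
      ⊆ Set.Ioc 0 b ∪ Set.Ioc (2*π - b) (2*π) := by
    rintro x ⟨hx, hgx⟩
    rcases eq_or_lt_of_le hx.2 with heq | hlt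
    · exact Or.inr ⟨by linarith, hx.2⟩
    · have hxo : x ∈ Set.Ioo (0:ℝ) (2*π) := ⟨hx.1, hlt⟩
      have hbound := hg x hxo
      have hm0 : 0 < min x (2*π - x) := lt_min hx.1 (by linarith)
      have hmb : min x (2*π - x) < b := by
        have h1 : y - 3/2 < π / min x (2*π - x) := by linarith
        rw [lt_div_iff₀ hm0] at h1
        rw [hb, lt_div_iff₀ (by linarith)]
        nlinarith
      rcases min_lt_iff.1 hmb with h | h
      · exact Or.inl ⟨hx.1, h.le⟩
      · exact Or.inr ⟨by linarith, hx.2⟩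
  have hμ : volume {x ∈ Set.Ioc (0:ℝ) (2 * π) | y < ‖g x‖}
      ≤ ENNReal.ofReal b + ENNReal.ofReal b := by
    calc volume {x ∈ Set.Ioc (0:ℝ) (2 * π) | y < ‖g x‖}
        ≤ volume (Set.Ioc 0 b ∪ Set.Ioc (2*π - b) (2*π)) := measure_mono hsub
      _ ≤ volume (Set.Ioc (0:ℝ) b) + volume (Set.Ioc (2*π - b) (2*π)) := measure_union_le _ _
      _ ≤ ENNReal.ofReal b + ENNReal.ofReal b := by
          rw [Real.volume_Ioc, Real.volume_Ioc]
          gcongr <;> linarith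
  calc (volume {x ∈ Set.Ioc (0:ℝ) (2 * π) | y < ‖g x‖}).toReal
      ≤ (ENNReal.ofReal b + ENNReal.ofReal b).toReal := by
        apply ENNReal.toReal_mono _ hμ
        simp [ENNReal.add_ne_top]
    _ = 2 * b := by
        rw [ENNReal.toReal_add ENNReal.ofReal_ne_top ENNReal.ofReal_ne_top,
          ENNReal.toReal_ofReal hb0.le]
        ring

end RearrLemmas

private lemma stmt6_int_rpow_Ioc {a r : ℝ} (ha : 0 < a) (hr : -1 < r) :
    ∫ t in Set.Ioc (0:ℝ) a, t ^ r = a ^ (r+1) / (r+1) := by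
  rw [← intervalIntegral.integral_of_le ha.le,
    integral_rpow (Or.inl hr), Real.zero_rpow (by linarith), sub_zero]

private lemma stmt6_int_rpow_Ioc' {a b r : ℝ} (ha : 0 < a) (hab : a ≤ b) (hr : r ≠ -1) :
    ∫ t in Set.Ioc a b, t ^ r = (b ^ (r+1) - a ^ (r+1)) / (r+1) := by
  rw [← intervalIntegral.integral_of_le hab, integral_rpow]
  right
  refine ⟨hr, ?_⟩
  rw [Set.uIcc_of_le hab]
  intro h
  exact absurd (h.1) (by linarith)

private lemma stmt6_integrableOn_rpow_Ioc {r : ℝ} (hr : -1 < r) (a : ℝ) :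
    IntegrableOn (fun t : ℝ => t ^ r) (Set.Ioc (0:ℝ) a) volume :=
  (intervalIntegral.intervalIntegrable_rpow' hr).1

private lemma stmt6_integrableOn_rpow_Ioc' {a b r : ℝ} (ha : 0 < a) :
    IntegrableOn (fun t : ℝ => t ^ r) (Set.Ioc a b) volume := by
  have hc : ContinuousOn (fun t : ℝ => t ^ r) (Set.Icc a b) := by
    intro t ht
    exact (Real.continuousAt_rpow_const t r (Or.inl (by linarith [ht.1]))).continuousWithinAt
  exact (hc.integrableOn_Icc).mono_set Set.Ioc_subset_Icc_self

end Stmt6Helpers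

set_option maxHeartbeats 1000000 in
/-- `‖D_n‖_{p,θ} ≍ n^{1-1/p}` for the Dirichlet kernel. -/
theorem stmt6 (p θ : ℝ) (hp1 : 1 < p) (hθ1 : 1 < θ) :
    ∃ C₁ C₂ : ℝ, 0 < C₁ ∧ 0 < C₂ ∧ ∀ n : ℕ, 1 ≤ n →
      C₁ * (n : ℝ) ^ (1 - 1 / p) ≤
        lorentzNorm p θ (fun x => 1 / 2 +
          ∑ k ∈ Finset.Icc 1 n, Complex.exp (Complex.I * (k : ℂ) * (x : ℂ))) ∧
      lorentzNorm p θ (fun x => 1 / 2 +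
          ∑ k ∈ Finset.Icc 1 n, Complex.exp (Complex.I * (k : ℂ) * (x : ℂ))) ≤
        C₂ * (n : ℝ) ^ (1 - 1 / p) := by
  have hpi := Real.pi_pos
  have hpi3 := Real.pi_gt_three
  have hp0 : (0:ℝ) < p := by linarith
  have hθ0 : (0:ℝ) < θ := by linarith
  have hs : 0 < 1 - 1/p := by
    have : 1/p < 1 := by rw [div_lt_one hp0]; exact hp1
    linarith
  set σ := 1 - 1/p with hσ
  have hr1 : (-1:ℝ) < θ/p - 1 := by
    have : 0 < θ/p := by positivity
    linarith
  have hθp : θ/p < θ := by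
    rw [div_lt_iff₀ hp0]
    nlinarith
  set K₁ : ℝ := (7/8:ℝ)^θ * (1/4:ℝ)^(θ/p) * (p/θ) with hK1
  set K₂ : ℝ := (2:ℝ)^θ * (p/θ) + (7*π)^θ / (θ*σ) with hK2
  have hK1pos : 0 < K₁ := by positivity
  have hK2pos : 0 < K₂ := by positivity
  refine ⟨K₁ ^ (1/θ), K₂ ^ (1/θ), Real.rpow_pos_of_pos hK1pos _,
    Real.rpow_pos_of_pos hK2pos _, ?_⟩
  intro n hn
  have hnpos : (0:ℝ) < n := by exact_mod_cast hn
  have hn1 : (1:ℝ) ≤ n := by exact_mod_cast hn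
  set g : ℝ → ℂ := fun x => 1 / 2 +
    ∑ k ∈ Finset.Icc 1 n, Complex.exp (Complex.I * (k : ℂ) * (x : ℂ)) with hgdef
  have habs_le : ∀ x, ‖g x‖ ≤ (n:ℝ) + 1/2 := fun x => stmt6_absD_le n x
  have hM : (0:ℝ) ≤ (n:ℝ) + 1/2 := by positivity
  have habs_inv : ∀ x ∈ Set.Ioo (0:ℝ) (2*π),
      ‖g x‖ ≤ 3/2 + π / min x (2*π - x) :=
    fun x hx => stmt6_absD_le_inv n x hx
  -- rearrangement bounds
  have hb1 : ∀ t ∈ Set.Ioc (0:ℝ) (2*π), rearr g t ≤ 2*n := by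
    intro t ht
    have h := stmt6_rearr_le_M hM habs_le (g := g) ht.1.le
    linarith
  have hb2 : ∀ t ∈ Set.Ioc (0:ℝ) (2*π), rearr g t ≤ 7*π/t := by
    intro t ht
    have ht0 := ht.1
    have h2pt : (0:ℝ) < 2*π/t := by positivity
    have hy : (3:ℝ)/2 < 3/2 + 2*π/t := by linarith
    have hμ := stmt6_mu_upper habs_inv hy
    have hsimp : 2*(π/((3/2 + 2*π/t) - 3/2)) = t := by
      have h1 : (3:ℝ)/2 + 2*π/t - 3/2 = 2*π/t := by ring
      rw [h1, div_div_eq_mul_div]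
      field_simp [hpi.ne']
    have hr := stmt6_rearr_le (g := g) (t := t) (y := 3/2 + 2*π/t)
      (by positivity) (le_of_le_of_eq hμ hsimp)
    have hfinal : 3/2 + 2*π/t ≤ 7*π/t := by
      have h5 : (3:ℝ)/2 ≤ 5*π/t := by
        rw [le_div_iff₀ ht0]
        nlinarith [ht.2]
      have : 2*π/t + 5*π/t = 7*π/t := by ring
      linarith
    linarith
  have hb3 : ∀ t, 0 ≤ t → t < 1/(2*(n:ℝ)) → 7/8*(n:ℝ) ≤ rearr g t := by
    intro t ht0 htn
    apply stmt6_rearr_ge hM habs_le ht0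
    intro y hy0 hμ
    by_contra hlt
    push_neg at hlt
    have h2n : (1:ℝ)/(2*(n:ℝ)) ≤ 2*π := by
      have h1 : (1:ℝ)/(2*(n:ℝ)) ≤ 1 := by
        rw [div_le_one (by positivity)]; nlinarith
      linarith
    have hsub : Set.Ioc (0:ℝ) (1/(2*(n:ℝ)))
        ⊆ {x ∈ Set.Ioc (0:ℝ) (2*π) | y < ‖g x‖} := by
      intro x hx
      refine ⟨⟨hx.1, hx.2.trans h2n⟩, ?_⟩
      exact lt_of_lt_of_le hlt (stmt6_absD_ge n hn x hx)
    have hne : volume {x ∈ Set.Ioc (0:ℝ) (2*π) | y < ‖g x‖} ≠ ⊤ := by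
      apply ne_top_of_le_ne_top _ (measure_mono (Set.sep_subset _ _))
      rw [Real.volume_Ioc]; exact ENNReal.ofReal_ne_top
    have hmono := ENNReal.toReal_mono hne (measure_mono hsub)
    rw [Real.volume_Ioc, sub_zero, ENNReal.toReal_ofReal (by positivity)] at hmono
    linarith
  -- integrand facts
  have hFnonneg : ∀ t ∈ Set.Ioc (0:ℝ) (2*π), 0 ≤ rearr g t ^ θ * t ^ (θ/p - 1) := by
    intro t ht
    exact mul_nonneg (Real.rpow_nonneg (stmt6_rearr_nonneg t) θ)
      (Real.rpow_nonneg ht.1.le _)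
  have hFaeN : 0 ≤ᵐ[volume.restrict (Set.Ioc (0:ℝ) (2*π))]
      fun t => rearr g t ^ θ * t ^ (θ/p - 1) := by
    apply (ae_restrict_iff' measurableSet_Ioc).2 (ae_of_all _ _)
    intro t ht
    exact hFnonneg t ht
  have hFmeas : AEStronglyMeasurable (fun t => rearr g t ^ θ * t ^ (θ/p - 1))
      (volume.restrict (Set.Ioc (0:ℝ) (2*π))) := by
    have h1 := stmt6_rearr_aemeasurable hM habs_le
    have h2 : AEMeasurable (fun t => rearr g t ^ θ)
        (volume.restrict (Set.Ioc (0:ℝ) (2*π))) :=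
      (Real.continuous_rpow_const hθ0.le).measurable.comp_aemeasurable h1
    have h3 : AEMeasurable (fun t : ℝ => t ^ (θ/p - 1))
        (volume.restrict (Set.Ioc (0:ℝ) (2*π))) := by
      apply ContinuousOn.aemeasurable _ measurableSet_Ioc
      intro t ht
      exact (Real.continuousAt_rpow_const t _ (Or.inl (ne_of_gt ht.1))).continuousWithinAt
    exact (h2.mul h3).aestronglyMeasurable
  have hFint : IntegrableOn (fun t => rearr g t ^ θ * t ^ (θ/p - 1))
      (Set.Ioc (0:ℝ) (2*π)) volume := by
    apply Integrable.mono' ((stmt6_integrableOn_rpow_Ioc hr1 (2*π)).const_mul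
      ((2*(n:ℝ))^θ)) hFmeas
    apply (ae_restrict_iff' measurableSet_Ioc).2 (ae_of_all _ _)
    intro t ht
    rw [Real.norm_eq_abs, abs_of_nonneg (hFnonneg t ht)]
    apply mul_le_mul_of_nonneg_right _ (Real.rpow_nonneg ht.1.le _)
    exact Real.rpow_le_rpow (stmt6_rearr_nonneg t) (hb1 t ht) hθ0.le
  -- exponent algebra
  have he : θ/p - 1 + 1 = θ/p := by ring
  have e3 : (n:ℝ)^θ * (((n:ℝ)^(θ/p))⁻¹) = (n:ℝ)^(θ*σ) := by
    rw [← Real.rpow_neg hnpos.le, ← Real.rpow_add hnpos]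
    congr 1
    rw [hσ]; field_simp; ring
  -- lower bound
  have h142 : (1:ℝ)/(4*(n:ℝ)) ≤ 2*π := by
    have h1 : (1:ℝ)/(4*(n:ℝ)) ≤ 1 := by
      rw [div_le_one (by positivity)]; nlinarith
    linarith
  have ha0 : (0:ℝ) < 1/(4*(n:ℝ)) := by positivity
  have hlow : K₁ * (n:ℝ)^(θ*σ)
      ≤ ∫ t in Set.Ioc (0:ℝ) (2*π), rearr g t ^ θ * t ^ (θ/p - 1) := by
    have step1 : (∫ t in Set.Ioc (0:ℝ) (1/(4*(n:ℝ))), (7/8*(n:ℝ))^θ * t ^ (θ/p - 1))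
        ≤ ∫ t in Set.Ioc (0:ℝ) (1/(4*(n:ℝ))), rearr g t ^ θ * t ^ (θ/p - 1) := by
      apply integral_mono_of_nonneg
      · apply (ae_restrict_iff' measurableSet_Ioc).2 (ae_of_all _ _)
        intro t ht
        exact mul_nonneg (Real.rpow_nonneg (by positivity) _) (Real.rpow_nonneg ht.1.le _)
      · exact hFint.mono_set (Set.Ioc_subset_Ioc_right h142)
      · apply (ae_restrict_iff' measurableSet_Ioc).2 (ae_of_all _ _)
        intro t ht
        apply mul_le_mul_of_nonneg_right _ (Real.rpow_nonneg ht.1.le _)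
        apply Real.rpow_le_rpow (by positivity) _ hθ0.le
        apply hb3 t ht.1.le
        calc t ≤ 1/(4*(n:ℝ)) := ht.2
          _ < 1/(2*(n:ℝ)) := by
            rw [div_lt_div_iff₀ (by positivity) (by positivity)]
            nlinarith
    have step2 : (∫ t in Set.Ioc (0:ℝ) (1/(4*(n:ℝ))), rearr g t ^ θ * t ^ (θ/p - 1))
        ≤ ∫ t in Set.Ioc (0:ℝ) (2*π), rearr g t ^ θ * t ^ (θ/p - 1) :=
      setIntegral_mono_set hFint hFaeN
        (HasSubset.Subset.eventuallyLE (Set.Ioc_subset_Ioc_right h142))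
    have hcalc : (∫ t in Set.Ioc (0:ℝ) (1/(4*(n:ℝ))), (7/8*(n:ℝ))^θ * t ^ (θ/p - 1))
        = K₁ * (n:ℝ)^(θ*σ) := by
      rw [MeasureTheory.integral_const_mul, stmt6_int_rpow_Ioc ha0 hr1, he]
      have e1 : ((7:ℝ)/8*(n:ℝ))^θ = (7/8:ℝ)^θ * (n:ℝ)^θ :=
        Real.mul_rpow (by norm_num) hnpos.le
      have e2 : ((1:ℝ)/(4*(n:ℝ)))^(θ/p) = (1/4:ℝ)^(θ/p) * (((n:ℝ)^(θ/p))⁻¹) := by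
        rw [show (1:ℝ)/(4*(n:ℝ)) = (1/4) * ((n:ℝ))⁻¹ by field_simp,
          Real.mul_rpow (by norm_num) (by positivity), Real.inv_rpow hnpos.le]
      have hdiv : ∀ x : ℝ, x / (θ/p) = x * (p/θ) := fun x => by
        rw [div_div_eq_mul_div, mul_div_assoc]
      rw [e1, e2, hK1, ← e3, hdiv]
      ring
    rw [hcalc] at step1
    linarith
  -- upper bound
  have h1n2 : (1:ℝ)/(n:ℝ) ≤ 2*π := by
    have h1 : (1:ℝ)/(n:ℝ) ≤ 1 := by rw [div_le_one hnpos]; exact hn1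
    linarith
  have hb0' : (0:ℝ) < 1/(n:ℝ) := by positivity
  have hup : (∫ t in Set.Ioc (0:ℝ) (2*π), rearr g t ^ θ * t ^ (θ/p - 1))
      ≤ K₂ * (n:ℝ)^(θ*σ) := by
    have hsplit : (∫ t in Set.Ioc (0:ℝ) (2*π), rearr g t ^ θ * t ^ (θ/p - 1))
        = (∫ t in Set.Ioc (0:ℝ) (1/(n:ℝ)), rearr g t ^ θ * t ^ (θ/p - 1))
          + ∫ t in Set.Ioc (1/(n:ℝ)) (2*π), rearr g t ^ θ * t ^ (θ/p - 1) := by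
      rw [← setIntegral_union (Set.Ioc_disjoint_Ioc_of_le le_rfl) measurableSet_Ioc
        (hFint.mono_set (Set.Ioc_subset_Ioc_right h1n2))
        (hFint.mono_set (Set.Ioc_subset_Ioc_left hb0'.le)),
        Set.Ioc_union_Ioc_eq_Ioc hb0'.le h1n2]
    have hp1' : (∫ t in Set.Ioc (0:ℝ) (1/(n:ℝ)), rearr g t ^ θ * t ^ (θ/p - 1))
        ≤ (2*(n:ℝ))^θ * ((1/(n:ℝ))^(θ/p)/(θ/p)) := by
      have hmono : (∫ t in Set.Ioc (0:ℝ) (1/(n:ℝ)), rearr g t ^ θ * t ^ (θ/p - 1))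
          ≤ ∫ t in Set.Ioc (0:ℝ) (1/(n:ℝ)), (2*(n:ℝ))^θ * t ^ (θ/p - 1) := by
        apply integral_mono_of_nonneg
        · apply (ae_restrict_iff' measurableSet_Ioc).2 (ae_of_all _ _)
          intro t ht
          exact hFnonneg t ⟨ht.1, ht.2.trans h1n2⟩
        · exact (stmt6_integrableOn_rpow_Ioc hr1 _).const_mul _
        · apply (ae_restrict_iff' measurableSet_Ioc).2 (ae_of_all _ _)
          intro t ht
          apply mul_le_mul_of_nonneg_right _ (Real.rpow_nonneg ht.1.le _)
          exact Real.rpow_le_rpow (stmt6_rearr_nonneg t)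
            (hb1 t ⟨ht.1, ht.2.trans h1n2⟩) hθ0.le
      rw [MeasureTheory.integral_const_mul, stmt6_int_rpow_Ioc hb0' hr1, he] at hmono
      exact hmono
    have hp2' : (∫ t in Set.Ioc (1/(n:ℝ)) (2*π), rearr g t ^ θ * t ^ (θ/p - 1))
        ≤ (7*π)^θ * ((n:ℝ)^(θ*σ)/(θ*σ)) := by
      have hstep : (∫ t in Set.Ioc (1/(n:ℝ)) (2*π), rearr g t ^ θ * t ^ (θ/p - 1))
          ≤ ∫ t in Set.Ioc (1/(n:ℝ)) (2*π), (7*π)^θ * t ^ (θ/p - 1 - θ) := by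
        apply integral_mono_of_nonneg
        · apply (ae_restrict_iff' measurableSet_Ioc).2 (ae_of_all _ _)
          intro t ht
          exact hFnonneg t ⟨lt_trans hb0' ht.1, ht.2⟩
        · exact (stmt6_integrableOn_rpow_Ioc' hb0').const_mul _
        · apply (ae_restrict_iff' measurableSet_Ioc).2 (ae_of_all _ _)
          intro t ht
          have ht0 : (0:ℝ) < t := lt_trans hb0' ht.1
          have h7 : rearr g t ≤ 7*π/t := hb2 t ⟨ht0, ht.2⟩
          calc rearr g t ^ θ * t ^ (θ/p-1)
              ≤ (7*π/t)^θ * t ^ (θ/p-1) :=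
                mul_le_mul_of_nonneg_right
                  (Real.rpow_le_rpow (stmt6_rearr_nonneg t) h7 hθ0.le)
                  (Real.rpow_nonneg ht0.le _)
            _ = ((7*π)^θ / t^θ) * t ^ (θ/p-1) := by
                rw [Real.div_rpow (by positivity) ht0.le]
            _ = (7*π)^θ * (t ^ (θ/p-1) / t^θ) := by
                rw [div_mul_eq_mul_div, mul_div_assoc]
            _ = (7*π)^θ * t ^ (θ/p - 1 - θ) := by
                rw [← Real.rpow_sub ht0]
      have hc' : θ/p - 1 - θ + 1 = θ/p - θ := by ring
      have hne1 : θ/p - 1 - θ ≠ -1 := by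
        intro h
        have : θ/p = θ := by linarith
        linarith
      have hint : (∫ t in Set.Ioc (1/(n:ℝ)) (2*π), (7*π)^θ * t ^ (θ/p - 1 - θ))
          = (7*π)^θ * (((2*π) ^ (θ/p-θ) - (1/(n:ℝ)) ^ (θ/p-θ)) / (θ/p-θ)) := by
        rw [MeasureTheory.integral_const_mul, stmt6_int_rpow_Ioc' hb0' h1n2 hne1, hc']
      have hcσ : θ/p - θ = -(θ*σ) := by rw [hσ]; field_simp; ring
      have hσpos : (0:ℝ) < θ*σ := by positivity
      have hbn : ((1:ℝ)/(n:ℝ)) ^ (θ/p-θ) = (n:ℝ)^(θ*σ) := by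
        rw [hcσ, one_div, Real.inv_rpow hnpos.le, ← Real.rpow_neg hnpos.le, neg_neg]
      have hbnd : (((2*π) ^ (θ/p-θ) - (1/(n:ℝ)) ^ (θ/p-θ)) / (θ/p-θ))
          ≤ (n:ℝ)^(θ*σ)/(θ*σ) := by
        rw [hbn, hcσ]
        have h2p : (0:ℝ) < (2*π) ^ (-(θ*σ)) := Real.rpow_pos_of_pos (by linarith) _
        have hrw : ((2*π)^(-(θ*σ)) - (n:ℝ)^(θ*σ)) / (-(θ*σ))
            = ((n:ℝ)^(θ*σ) - (2*π)^(-(θ*σ))) / (θ*σ) := by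
          rw [div_neg, neg_div', neg_sub]
        rw [hrw]
        exact (div_le_div_iff_of_pos_right hσpos).2 (by linarith)
      calc (∫ t in Set.Ioc (1/(n:ℝ)) (2*π), rearr g t ^ θ * t ^ (θ/p - 1))
          ≤ ∫ t in Set.Ioc (1/(n:ℝ)) (2*π), (7*π)^θ * t ^ (θ/p - 1 - θ) := hstep
        _ = (7*π)^θ * (((2*π) ^ (θ/p-θ) - (1/(n:ℝ)) ^ (θ/p-θ)) / (θ/p-θ)) := hint
        _ ≤ (7*π)^θ * ((n:ℝ)^(θ*σ)/(θ*σ)) :=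
            mul_le_mul_of_nonneg_left hbnd (Real.rpow_nonneg (by positivity) _)
    have hfin : (2*(n:ℝ))^θ * ((1/(n:ℝ))^(θ/p)/(θ/p)) + (7*π)^θ * ((n:ℝ)^(θ*σ)/(θ*σ))
        = K₂ * (n:ℝ)^(θ*σ) := by
      have e1 : (2*(n:ℝ))^θ = (2:ℝ)^θ * (n:ℝ)^θ := Real.mul_rpow (by norm_num) hnpos.le
      have e2 : ((1:ℝ)/(n:ℝ))^(θ/p) = ((n:ℝ)^(θ/p))⁻¹ := by
        rw [one_div, Real.inv_rpow hnpos.le]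
      have hdiv : ∀ x : ℝ, x / (θ/p) = x * (p/θ) := fun x => by
        rw [div_div_eq_mul_div, mul_div_assoc]
      rw [e1, e2, hK2, ← e3, hdiv]
      ring
    rw [hsplit, ← hfin]
    exact add_le_add hp1' hp2'
  -- conclusion
  have hI0 : 0 ≤ ∫ t in Set.Ioc (0:ℝ) (2*π), rearr g t ^ θ * t ^ (θ/p - 1) :=
    setIntegral_nonneg measurableSet_Ioc hFnonneg
  have hnθσ : (0:ℝ) ≤ (n:ℝ)^(θ*σ) := Real.rpow_nonneg hnpos.le _
  have hpow : (((n:ℝ)^(θ*σ))^(1/θ)) = (n:ℝ)^σ := by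
    rw [← Real.rpow_mul hnpos.le]
    congr 1
    field_simp
  have hln : lorentzNorm p θ g
      = (∫ t in Set.Ioc (0:ℝ) (2*π), rearr g t ^ θ * t ^ (θ/p - 1)) ^ (1/θ) := rfl
  constructor
  · have h := Real.rpow_le_rpow (by positivity) hlow (by positivity : (0:ℝ) ≤ 1/θ)
    rw [Real.mul_rpow hK1pos.le hnθσ, hpow] at h
    exact hln ▸ h
  · have h := Real.rpow_le_rpow hI0 hup (by positivity : (0:ℝ) ≤ 1/θ)
    rw [Real.mul_rpow hK2pos.le hnθσ, hpow] at h
    exact hln ▸ h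
end

section
/- Let β > 0, d_j ≥ 0 for j = 1,...,m, 1 ≤ θ_j < ∞, and γ̄ = (1,...,1). Let Γ^⊥(N) = { s̄ ∈ ℤ_+^m : ⟨s̄,γ̄⟩ ≥ n } where n = log₂ N^{1/r₁} (so ⟨s̄,γ̄⟩ = Σ_j s_j ≥ n). Then the mixed ℓ_θ̄-norm satisfies ‖{ 2^{-β Σ_j s_j} Π_{j=1}^m s_j^{d_j} }_{s̄ ∈ Γ^⊥(N)}‖_{ℓ_θ̄} ≤ C 2^{-nβ} n^{Σ_{j=1}^m d_j + Σ_{j=2}^m 1/θ_j}, with C independent of n. -/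
open scoped BigOperators ENNReal
open MeasureTheory Real Set

set_option maxHeartbeats 1000000 in
lemma aux_summable_base {x : ℝ} (hx0 : 0 < x) (hx1 : x < 1) {e : ℝ} (he : 0 ≤ e) :
    Summable (fun i : ℕ => ((i : ℝ) + 1) ^ e * x ^ i) := by
  set N := ⌈e⌉₊ with hN
  have h1 : Summable (fun i : ℕ => ((i : ℝ)) ^ N * x ^ i) :=
    summable_pow_mul_geometric_of_norm_lt_one N
      (by rw [Real.norm_eq_abs, abs_of_pos hx0]; exact hx1)
  have h2 : Summable (fun i : ℕ => (((i + 1 : ℕ) : ℝ)) ^ N * x ^ (i + 1)) :=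
    (summable_nat_add_iff 1).mpr h1
  have h3 : Summable (fun i : ℕ => ((i : ℝ) + 1) ^ (N : ℕ) * x ^ i) := by
    have h4 := h2.mul_left x⁻¹
    refine h4.congr fun i => ?_
    have hxne : x ≠ 0 := ne_of_gt hx0
    push_cast
    rw [pow_succ]
    field_simp
  refine h3.of_nonneg_of_le (fun i => by positivity) (fun i => ?_)
  have hb : (1 : ℝ) ≤ (i : ℝ) + 1 := by have := Nat.cast_nonneg (α := ℝ) i; linarith
  have hle2 : ((i : ℝ) + 1) ^ e ≤ ((i : ℝ) + 1) ^ (N : ℕ) := by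
    rw [← Real.rpow_natCast ((i:ℝ)+1) N]
    exact Real.rpow_le_rpow_of_exponent_le hb (Nat.le_ceil e)
  exact mul_le_mul_of_nonneg_right hle2 (by positivity)

lemma tsum_ite_shift (f : ℕ → ℝ) (M : ℕ) :
    (∑' k : ℕ, if M ≤ k then f k else 0) = ∑' i : ℕ, f (M + i) := by
  have hinj : Function.Injective (fun i : ℕ => M + i) := fun a b h => by simpa using h
  have hsupp : Function.support (fun k : ℕ => if M ≤ k then f k else 0) ⊆
      Set.range (fun i : ℕ => M + i) := by
    intro k hk
    by_cases h : M ≤ k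
    · exact ⟨k - M, by show M + (k - M) = k; omega⟩
    · simp [h] at hk
  rw [← Function.Injective.tsum_eq hinj hsupp]
  exact (tsum_congr fun i => by rw [if_pos (by omega)]).symm

lemma summable_ite_poly {x : ℝ} (hx0 : 0 < x) (hx1 : x < 1) {e : ℝ} (he : 0 ≤ e) (M : ℕ) :
    Summable (fun k : ℕ => if M ≤ k then (k : ℝ) ^ e * x ^ k else 0) := by
  refine (aux_summable_base hx0 hx1 he).of_nonneg_of_le (fun k => ?_) (fun k => ?_)
  · split <;> positivity
  · split
    · have : ((k : ℝ)) ^ e ≤ ((k : ℝ) + 1) ^ e :=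
        Real.rpow_le_rpow (by positivity) (by linarith) he
      exact mul_le_mul_of_nonneg_right this (by positivity)
    · positivity

lemma lemC {x : ℝ} (hx0 : 0 < x) (hx1 : x < 1) {e : ℝ} (he : 0 ≤ e) :
    ∃ C : ℝ, 0 < C ∧ ∀ M : ℕ,
      (∑' k : ℕ, if M ≤ k then (k : ℝ) ^ e * x ^ k else 0) ≤
        C * ((M : ℝ) + 1) ^ e * x ^ M := by
  set B := ∑' i : ℕ, ((i : ℝ) + 1) ^ e * x ^ i with hB
  have hBnn : 0 ≤ B := tsum_nonneg fun i => by positivity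
  refine ⟨B + 1, by positivity, fun M => ?_⟩
  rw [tsum_ite_shift]
  have hle : ∀ i : ℕ, ((M + i : ℕ) : ℝ) ^ e * x ^ (M + i) ≤
      ((M : ℝ) + 1) ^ e * x ^ M * (((i : ℝ) + 1) ^ e * x ^ i) := by
    intro i
    have h1 : ((M + i : ℕ) : ℝ) ^ e ≤ (((M : ℝ) + 1) * ((i : ℝ) + 1)) ^ e := by
      apply Real.rpow_le_rpow (by positivity) ?_ he
      push_cast; nlinarith [Nat.cast_nonneg (α := ℝ) M, Nat.cast_nonneg (α := ℝ) i]
    rw [Real.mul_rpow (by positivity) (by positivity)] at h1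
    calc ((M + i : ℕ) : ℝ) ^ e * x ^ (M + i)
        ≤ ((M : ℝ) + 1) ^ e * ((i : ℝ) + 1) ^ e * x ^ (M + i) :=
          mul_le_mul_of_nonneg_right h1 (by positivity)
      _ = ((M : ℝ) + 1) ^ e * x ^ M * (((i : ℝ) + 1) ^ e * x ^ i) := by
          rw [pow_add]; ring
  have hsumd : Summable (fun i : ℕ => ((M : ℝ) + 1) ^ e * x ^ M * (((i : ℝ) + 1) ^ e * x ^ i)) :=
    (aux_summable_base hx0 hx1 he).mul_left _
  have hsumf : Summable (fun i : ℕ => ((M + i : ℕ) : ℝ) ^ e * x ^ (M + i)) :=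
    hsumd.of_nonneg_of_le (fun i => by positivity) hle
  calc (∑' i : ℕ, ((M + i : ℕ) : ℝ) ^ e * x ^ (M + i))
      ≤ ∑' i : ℕ, ((M : ℝ) + 1) ^ e * x ^ M * (((i : ℝ) + 1) ^ e * x ^ i) :=
        Summable.tsum_le_tsum hle hsumf hsumd
    _ = ((M : ℝ) + 1) ^ e * x ^ M * B := tsum_mul_left
    _ ≤ (B + 1) * ((M : ℝ) + 1) ^ e * x ^ M := by nlinarith [Real.rpow_nonneg (by positivity : (0:ℝ) ≤ (M:ℝ)+1) e, pow_nonneg hx0.le M]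

lemma pow_rpow_comm {q : ℝ} (hq : 0 ≤ q) (m : ℕ) (θ : ℝ) : (q ^ m) ^ θ = (q ^ θ) ^ m := by
  rw [← Real.rpow_natCast q m, ← Real.rpow_natCast (q ^ θ) m, ← Real.rpow_mul hq,
    ← Real.rpow_mul hq]
  ring_nf

lemma summable_poly_shift {y : ℝ} (hy0 : 0 < y) (hy1 : y < 1) {e : ℝ} (he : 0 ≤ e) (n : ℕ) :
    Summable (fun k : ℕ => (k : ℝ) ^ e * y ^ (k - n)) := by
  rw [← summable_nat_add_iff n]
  refine ((aux_summable_base hy0 hy1 he).mul_left (((n : ℝ) + 1) ^ e)).of_nonneg_of_le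
    (fun k => by positivity) (fun k => ?_)
  have h1 : ((k + n : ℕ) : ℝ) ^ e ≤ ((n : ℝ) + 1) ^ e * ((k : ℝ) + 1) ^ e := by
    rw [← Real.mul_rpow (by positivity) (by positivity)]
    apply Real.rpow_le_rpow (by positivity) ?_ he
    push_cast
    nlinarith [Nat.cast_nonneg (α := ℝ) k, Nat.cast_nonneg (α := ℝ) n]
  have h2 : k + n - n = k := by omega
  rw [h2]
  calc ((k + n : ℕ) : ℝ) ^ e * y ^ k
      ≤ ((n : ℝ) + 1) ^ e * ((k : ℝ) + 1) ^ e * y ^ k :=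
        mul_le_mul_of_nonneg_right h1 (by positivity)
    _ = ((n : ℝ) + 1) ^ e * (((k : ℝ) + 1) ^ e * y ^ k) := by ring

lemma sum_tsub {ι : Type*} (S : Finset ι) (f : ι → ℕ) (n : ℕ) :
    (∑ j ∈ S, (f j - n)) ≤ (∑ j ∈ S, f j) - n := by
  induction S using Finset.cons_induction with
  | empty => simp
  | cons a S h ih => rw [Finset.sum_cons, Finset.sum_cons]; omega

lemma rpow_sum' {ι : Type*} {x : ℝ} (hx : 0 < x) (s : Finset ι) (f : ι → ℝ) :
    x ^ (∑ i ∈ s, f i) = ∏ i ∈ s, x ^ f i := by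
  induction s using Finset.cons_induction with
  | empty => simp
  | cons a s ha ih => rw [Finset.sum_cons, Finset.prod_cons, Real.rpow_add hx, ih]

lemma lemD {β θ d : ℝ} (hβ : 0 < β) (hθ : 1 ≤ θ) (hd : 0 ≤ d) :
    ∃ C : ℝ, 0 < C ∧ ∀ n : ℕ, 1 ≤ n →
      (∑' k : ℕ, ((k : ℝ) ^ d * ((2 : ℝ) ^ (-β)) ^ (k - n)) ^ θ) ^ (1 / θ) ≤
        C * (n : ℝ) ^ (d + 1 / θ) := by
  have hθ0 : 0 < θ := lt_of_lt_of_le one_pos hθ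
  have hθne : θ ≠ 0 := ne_of_gt hθ0
  set q : ℝ := (2 : ℝ) ^ (-β) with hqdef
  have hq0 : 0 < q := Real.rpow_pos_of_pos two_pos _
  have hq1 : q < 1 := Real.rpow_lt_one_of_one_lt_of_neg one_lt_two (by linarith)
  set y : ℝ := q ^ θ with hydef
  have hy0 : 0 < y := Real.rpow_pos_of_pos hq0 _
  have hy1 : y < 1 := Real.rpow_lt_one hq0.le hq1 hθ0
  set e : ℝ := d * θ with hedef
  have he : 0 ≤ e := mul_nonneg hd hθ0.le
  set B := ∑' i : ℕ, ((i : ℝ) + 1) ^ e * y ^ i with hB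
  have hBnn : 0 ≤ B := tsum_nonneg fun i => by positivity
  refine ⟨(2 + 2 ^ e * (B + 1)) ^ (1 / θ), by positivity, fun n hn => ?_⟩
  have hn0 : (0 : ℝ) < (n : ℝ) := by exact_mod_cast hn
  have hrw : ∀ k : ℕ, ((k : ℝ) ^ d * q ^ (k - n)) ^ θ = (k : ℝ) ^ e * y ^ (k - n) := by
    intro k
    rw [Real.mul_rpow (by positivity) (by positivity), ← Real.rpow_mul (Nat.cast_nonneg k),
      pow_rpow_comm hq0.le]
  have hsum : Summable (fun k : ℕ => (k : ℝ) ^ e * y ^ (k - n)) :=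
    summable_poly_shift hy0 hy1 he n
  -- split
  set f1 : ℕ → ℝ := fun k => if k < n + 1 then (k : ℝ) ^ e else 0 with hf1
  set f2 : ℕ → ℝ := fun k => if n + 1 ≤ k then (k : ℝ) ^ e * y ^ (k - n) else 0 with hf2
  have hsplit : ∀ k : ℕ, (k : ℝ) ^ e * y ^ (k - n) = f1 k + f2 k := by
    intro k
    by_cases hk : n + 1 ≤ k
    · simp only [hf1, hf2, if_pos hk, if_neg (by omega : ¬ k < n + 1), zero_add]
    · have hkn : k - n = 0 := by omega
      simp only [hf1, hf2, if_pos (by omega : k < n + 1), if_neg hk, hkn, pow_zero,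
        mul_one, add_zero]
  have hf1zero : ∀ b ∉ Finset.range (n + 1), f1 b = 0 := by
    intro b hb
    simp only [Finset.mem_range, not_lt] at hb
    simp only [hf1, if_neg (by omega : ¬ b < n + 1)]
  have hsum1 : Summable f1 := summable_of_ne_finset_zero hf1zero
  have hsum2 : Summable f2 := by
    refine hsum.of_nonneg_of_le (fun k => ?_) (fun k => ?_)
    · simp only [hf2]; split <;> positivity
    · simp only [hf2]; split
      · exact le_refl _
      · positivity
  have htsum1 : (∑' k : ℕ, f1 k) ≤ 2 * (n : ℝ) ^ (e + 1) := by
    rw [tsum_eq_sum hf1zero]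
    have hbd : ∀ k ∈ Finset.range (n + 1), f1 k ≤ (n : ℝ) ^ e := by
      intro k hk
      simp only [hf1, if_pos (Finset.mem_range.mp hk)]
      exact Real.rpow_le_rpow (Nat.cast_nonneg k)
        (by exact_mod_cast Nat.lt_succ_iff.mp (Finset.mem_range.mp hk)) he
    calc (∑ k ∈ Finset.range (n + 1), f1 k) ≤ (n + 1) * (n : ℝ) ^ e := by
          simpa [Finset.card_range, nsmul_eq_mul] using
            Finset.sum_le_card_nsmul (Finset.range (n + 1)) f1 ((n : ℝ) ^ e) hbd
      _ ≤ 2 * (n : ℝ) ^ (e + 1) := by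
          rw [Real.rpow_add_one (ne_of_gt hn0)]
          have : ((n : ℝ) + 1) ≤ 2 * n := by
            have : (1 : ℝ) ≤ (n : ℝ) := by exact_mod_cast hn
            linarith
          nlinarith [Real.rpow_nonneg hn0.le e]
  have htsum2 : (∑' k : ℕ, f2 k) ≤ 2 ^ e * (B + 1) * (n : ℝ) ^ (e + 1) := by
    rw [hf2, tsum_ite_shift (fun k => (k : ℝ) ^ e * y ^ (k - n)) (n + 1)]
    have hle : ∀ i : ℕ, ((n + 1 + i : ℕ) : ℝ) ^ e * y ^ (n + 1 + i - n) ≤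
        ((n : ℝ) + 1) ^ e * (((i : ℝ) + 1) ^ e * y ^ i) := by
      intro i
      have h1 : ((n + 1 + i : ℕ) : ℝ) ^ e ≤ ((n : ℝ) + 1) ^ e * ((i : ℝ) + 1) ^ e := by
        rw [← Real.mul_rpow (by positivity) (by positivity)]
        apply Real.rpow_le_rpow (by positivity) ?_ he
        push_cast
        nlinarith [Nat.cast_nonneg (α := ℝ) n, Nat.cast_nonneg (α := ℝ) i]
      have h2 : n + 1 + i - n = i + 1 := by omega
      rw [h2]
      have h3 : y ^ (i + 1) ≤ y ^ i := pow_le_pow_of_le_one hy0.le hy1.le (by omega)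
      calc ((n + 1 + i : ℕ) : ℝ) ^ e * y ^ (i + 1)
          ≤ ((n : ℝ) + 1) ^ e * ((i : ℝ) + 1) ^ e * y ^ i := by
            apply mul_le_mul h1 h3 (by positivity) (by positivity)
        _ = ((n : ℝ) + 1) ^ e * (((i : ℝ) + 1) ^ e * y ^ i) := by ring
    have hsumd : Summable (fun i : ℕ => ((n : ℝ) + 1) ^ e * (((i : ℝ) + 1) ^ e * y ^ i)) :=
      (aux_summable_base hy0 hy1 he).mul_left _
    have hsumf : Summable (fun i : ℕ => ((n + 1 + i : ℕ) : ℝ) ^ e * y ^ (n + 1 + i - n)) :=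
      hsumd.of_nonneg_of_le (fun i => by positivity) hle
    calc (∑' i : ℕ, ((n + 1 + i : ℕ) : ℝ) ^ e * y ^ (n + 1 + i - n))
        ≤ ∑' i : ℕ, ((n : ℝ) + 1) ^ e * (((i : ℝ) + 1) ^ e * y ^ i) :=
          Summable.tsum_le_tsum hle hsumf hsumd
      _ = ((n : ℝ) + 1) ^ e * B := tsum_mul_left
      _ ≤ 2 ^ e * (B + 1) * (n : ℝ) ^ (e + 1) := by
          have h4 : ((n : ℝ) + 1) ^ e ≤ (2 * n) ^ e := by
            apply Real.rpow_le_rpow (by positivity) ?_ he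
            have : (1 : ℝ) ≤ (n : ℝ) := by exact_mod_cast hn
            linarith
          rw [Real.mul_rpow (by norm_num) hn0.le] at h4
          have h5 : (n : ℝ) ^ e ≤ (n : ℝ) ^ (e + 1) := by
            apply Real.rpow_le_rpow_of_exponent_le (by exact_mod_cast hn) (by linarith)
          calc ((n : ℝ) + 1) ^ e * B ≤ (2 ^ e * (n : ℝ) ^ (e + 1)) * (B + 1) := by
                apply mul_le_mul (h4.trans (mul_le_mul_of_nonneg_left h5 (by positivity)))
                  (by linarith) hBnn (by positivity)
            _ = 2 ^ e * (B + 1) * (n : ℝ) ^ (e + 1) := by ring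
  have hS : (∑' k : ℕ, ((k : ℝ) ^ d * q ^ (k - n)) ^ θ) ≤
      (2 + 2 ^ e * (B + 1)) * (n : ℝ) ^ (e + 1) := by
    calc (∑' k : ℕ, ((k : ℝ) ^ d * q ^ (k - n)) ^ θ)
        = ∑' k : ℕ, ((k : ℝ) ^ e * y ^ (k - n)) := tsum_congr hrw
      _ = ∑' k : ℕ, (f1 k + f2 k) := tsum_congr hsplit
      _ = (∑' k : ℕ, f1 k) + ∑' k : ℕ, f2 k := Summable.tsum_add hsum1 hsum2
      _ ≤ 2 * (n : ℝ) ^ (e + 1) + 2 ^ e * (B + 1) * (n : ℝ) ^ (e + 1) :=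
          add_le_add htsum1 htsum2
      _ = (2 + 2 ^ e * (B + 1)) * (n : ℝ) ^ (e + 1) := by ring
  have hSnn : 0 ≤ ∑' k : ℕ, ((k : ℝ) ^ d * q ^ (k - n)) ^ θ :=
    tsum_nonneg fun k => by positivity
  calc (∑' k : ℕ, ((k : ℝ) ^ d * q ^ (k - n)) ^ θ) ^ (1 / θ)
      ≤ ((2 + 2 ^ e * (B + 1)) * (n : ℝ) ^ (e + 1)) ^ (1 / θ) :=
        Real.rpow_le_rpow hSnn hS (by positivity)
    _ = (2 + 2 ^ e * (B + 1)) ^ (1 / θ) * (n : ℝ) ^ (d + 1 / θ) := by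
        rw [Real.mul_rpow (by positivity) (by positivity), ← Real.rpow_mul hn0.le]
        congr 1
        field_simp
        congr 1; rw [hedef]; ring

lemma mixed_le (m : ℕ) : ∀ (τ : Fin m → ℝ), (∀ j, 1 ≤ τ j) → ∀ (c : Fin m → ℕ → ℝ),
    (∀ j k, 0 ≤ c j k) → (∀ j, Summable (fun k => c j k ^ τ j)) →
    ∀ (K : ℝ), 0 ≤ K → ∀ (a : (Fin m → ℕ) → ℝ),
    (∀ s, |a s| ≤ K * ∏ j, c j (s j)) →
    mixedSeqNorm m τ a ≤ K * ∏ j, (∑' k : ℕ, c j k ^ τ j) ^ (1 / τ j) := by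
  induction m with
  | zero =>
    intro τ _ c _ _ K _ a ha
    simpa [mixedSeqNorm] using ha (fun i => i.elim0)
  | succ m ih =>
    intro τ hτ c hc hsum K hK a ha
    rw [mixedSeqNorm]
    have hτ0 : 0 < τ 0 := lt_of_lt_of_le one_pos (hτ 0)
    set S0 : ℝ := (∑' k : ℕ, c 0 k ^ τ 0) ^ (1 / τ 0) with hS0
    have hT0nn : 0 ≤ ∑' k : ℕ, c 0 k ^ τ 0 :=
      tsum_nonneg fun k => Real.rpow_nonneg (hc 0 k) _
    have hS0nn : 0 ≤ S0 := Real.rpow_nonneg hT0nn _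
    have key : ∀ s : Fin m → ℕ,
        |(∑' k : ℕ, |a (Fin.cons k s)| ^ τ 0) ^ (1 / τ 0)| ≤
          (K * S0) * ∏ j : Fin m, c j.succ (s j) := by
      intro s
      set P : ℝ := ∏ j : Fin m, c j.succ (s j) with hP
      have hPnn : 0 ≤ P := Finset.prod_nonneg fun j _ => hc _ _
      have hbd : ∀ k : ℕ, |a (Fin.cons k s)| ^ τ 0 ≤ (K * P) ^ τ 0 * c 0 k ^ τ 0 := by
        intro k
        rw [← Real.mul_rpow (by positivity) (hc 0 k)]
        apply Real.rpow_le_rpow (abs_nonneg _) ?_ hτ0.le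
        have hha := ha (Fin.cons k s)
        have heq : (∏ j : Fin (m + 1), c j ((Fin.cons k s : Fin (m + 1) → ℕ) j)) = c 0 k * P := by
          simp only [Fin.prod_univ_succ, Fin.cons_zero, Fin.cons_succ]
          rw [hP]
        rw [heq] at hha
        calc |a (Fin.cons k s)| ≤ K * (c 0 k * P) := hha
          _ = K * P * c 0 k := by ring
      have hsum0 : Summable (fun k : ℕ => (K * P) ^ τ 0 * c 0 k ^ τ 0) := (hsum 0).mul_left _
      have hsumA : Summable (fun k : ℕ => |a (Fin.cons k s)| ^ τ 0) :=
        hsum0.of_nonneg_of_le (fun k => Real.rpow_nonneg (abs_nonneg _) _) hbd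
      have h1 : (∑' k : ℕ, |a (Fin.cons k s)| ^ τ 0) ≤ (K * P) ^ τ 0 * ∑' k : ℕ, c 0 k ^ τ 0 := by
        rw [← tsum_mul_left]
        exact Summable.tsum_le_tsum hbd hsumA hsum0
      have h2 : ((∑' k : ℕ, |a (Fin.cons k s)| ^ τ 0)) ^ (1 / τ 0) ≤
          ((K * P) ^ τ 0 * ∑' k : ℕ, c 0 k ^ τ 0) ^ (1 / τ 0) :=
        Real.rpow_le_rpow (tsum_nonneg fun k => Real.rpow_nonneg (abs_nonneg _) _) h1
          (by positivity)
      have h3 : ((K * P) ^ τ 0 * ∑' k : ℕ, c 0 k ^ τ 0) ^ (1 / τ 0) = (K * S0) * P := by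
        rw [Real.mul_rpow (by positivity) hT0nn,
          ← Real.rpow_mul (by positivity : (0:ℝ) ≤ K * P),
          mul_one_div_cancel (ne_of_gt hτ0), Real.rpow_one, ← hS0]
        ring
      rw [abs_of_nonneg (Real.rpow_nonneg
        (tsum_nonneg fun k => Real.rpow_nonneg (abs_nonneg _) _) _)]
      exact h2.trans (le_of_eq h3)
    have := ih (fun j => τ j.succ) (fun j => hτ j.succ) (fun j => c j.succ)
      (fun j k => hc j.succ k) (fun j => hsum j.succ) (K * S0) (by positivity) _ key
    refine this.trans (le_of_eq ?_)
    rw [Fin.prod_univ_succ]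
    ring

/-- `‖{2^{-βΣ s_j} Π s_j^{d_j}}_{Σ s_j ≥ n}‖_{ℓ_θ̄}
    ≤ C 2^{-nβ} n^{Σ d_j + Σ_{j=2}^m 1/θ_j}`. -/
theorem stmt9 (m : ℕ) (β : ℝ) (hβ : 0 < β)
    (d θ : Fin (m + 1) → ℝ) (hd : ∀ j, 0 ≤ d j) (hθ : ∀ j, 1 ≤ θ j) :
    ∃ C : ℝ, 0 < C ∧ ∀ n : ℕ, 1 ≤ n →
      mixedSeqNorm (m + 1) θ
        (fun s => if n ≤ ∑ j, s j then
          (2 : ℝ) ^ (-(β * ∑ j, (s j : ℝ))) * ∏ j, (s j : ℝ) ^ (d j) else 0) ≤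
      C * (2 : ℝ) ^ (-(n : ℝ) * β) *
        (n : ℝ) ^ (∑ j, d j + ∑ j ∈ Finset.univ.erase (0 : Fin (m + 1)), 1 / θ j) := by
  have hθ0 : 0 < θ 0 := lt_of_lt_of_le one_pos (hθ 0)
  have hθ0ne : θ 0 ≠ 0 := ne_of_gt hθ0
  set q : ℝ := (2 : ℝ) ^ (-β) with hqdef
  have hq0 : 0 < q := Real.rpow_pos_of_pos two_pos _
  have hq1 : q < 1 := Real.rpow_lt_one_of_one_lt_of_neg one_lt_two (by linarith)
  set x : ℝ := q ^ (θ 0) with hxdef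
  have hx0 : 0 < x := Real.rpow_pos_of_pos hq0 _
  have hx1 : x < 1 := Real.rpow_lt_one hq0.le hq1 hθ0
  have he0 : 0 ≤ d 0 * θ 0 := mul_nonneg (hd 0) hθ0.le
  obtain ⟨C0, hC0pos, hC0⟩ := lemC hx0 hx1 he0
  choose Cf hCfpos hCf using fun j : Fin m => lemD hβ (hθ j.succ) (hd j.succ)
  refine ⟨C0 ^ (1 / θ 0) * 2 ^ (d 0) * ∏ j : Fin m, Cf j,
    mul_pos (mul_pos (Real.rpow_pos_of_pos hC0pos _) (Real.rpow_pos_of_pos two_pos _))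
      (Finset.prod_pos fun j _ => hCfpos j), fun n hn => ?_⟩
  have hn0 : (0 : ℝ) < (n : ℝ) := by exact_mod_cast hn
  set c : Fin m → ℕ → ℝ := fun j k => (k : ℝ) ^ (d j.succ) * q ^ (k - n) with hcdef
  have hcnn : ∀ (j : Fin m) (k : ℕ), 0 ≤ c j k := fun j k => by
    simp only [hcdef]; positivity
  have hcsum : ∀ j : Fin m, Summable (fun k : ℕ => c j k ^ θ j.succ) := by
    intro j
    have hrw : ∀ k : ℕ, c j k ^ θ j.succ =
        (k : ℝ) ^ (d j.succ * θ j.succ) * (q ^ (θ j.succ)) ^ (k - n) := by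
      intro k
      simp only [hcdef]
      rw [Real.mul_rpow (by positivity) (by positivity),
        ← Real.rpow_mul (Nat.cast_nonneg k), pow_rpow_comm hq0.le]
    refine Summable.congr ?_ (fun k => (hrw k).symm)
    exact summable_poly_shift (Real.rpow_pos_of_pos hq0 _)
      (Real.rpow_lt_one hq0.le hq1 (lt_of_lt_of_le one_pos (hθ j.succ)))
      (mul_nonneg (hd j.succ) (le_trans zero_le_one (hθ j.succ))) n
  set K : ℝ := C0 ^ (1 / θ 0) * 2 ^ (d 0) * (n : ℝ) ^ (d 0) * q ^ n with hKdef
  have hKnn : 0 ≤ K := by positivity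
  rw [mixedSeqNorm]
  have key : ∀ s : Fin m → ℕ,
      |(∑' k : ℕ, |if n ≤ ∑ j, (Fin.cons k s : Fin (m+1) → ℕ) j then
          (2 : ℝ) ^ (-(β * ∑ j, ((Fin.cons k s : Fin (m+1) → ℕ) j : ℝ))) *
            ∏ j, ((Fin.cons k s : Fin (m+1) → ℕ) j : ℝ) ^ (d j) else 0| ^ (θ 0)) ^ (1 / θ 0)| ≤
        K * ∏ j, c j (s j) := by
    intro s
    set T : ℕ := ∑ j : Fin m, s j with hT
    set M : ℕ := n - T with hM
    set P : ℝ := ∏ j : Fin m, ((s j : ℕ) : ℝ) ^ (d j.succ) with hP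
    have hPnn : 0 ≤ P := Finset.prod_nonneg fun j _ => by positivity
    have hg : ∀ k : ℕ, (if n ≤ ∑ j, (Fin.cons k s : Fin (m+1) → ℕ) j then
          (2 : ℝ) ^ (-(β * ∑ j, ((Fin.cons k s : Fin (m+1) → ℕ) j : ℝ))) *
            ∏ j, ((Fin.cons k s : Fin (m+1) → ℕ) j : ℝ) ^ (d j) else 0)
        = if n ≤ k + T then q ^ k * q ^ T * ((k : ℝ) ^ (d 0) * P) else 0 := by
      intro k
      have hsum' : (∑ j, (Fin.cons k s : Fin (m+1) → ℕ) j) = k + T := by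
        simp [Fin.sum_univ_succ, hT]
      have hsumr : (∑ j, ((Fin.cons k s : Fin (m+1) → ℕ) j : ℝ)) = (k : ℝ) + (T : ℝ) := by
        simp only [Fin.sum_univ_succ, Fin.cons_zero, Fin.cons_succ, hT]
        push_cast
        ring
      have hprod : (∏ j, ((Fin.cons k s : Fin (m+1) → ℕ) j : ℝ) ^ (d j)) =
          (k : ℝ) ^ (d 0) * P := by
        simp [Fin.prod_univ_succ, hP]
      have hexp : (2 : ℝ) ^ (-(β * ((k : ℝ) + (T : ℝ)))) = q ^ k * q ^ T := by
        rw [hqdef, ← Real.rpow_natCast ((2:ℝ)^(-β)) k, ← Real.rpow_natCast ((2:ℝ)^(-β)) T,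
          ← Real.rpow_mul (by norm_num : (0:ℝ) ≤ 2), ← Real.rpow_mul (by norm_num : (0:ℝ) ≤ 2),
          ← Real.rpow_add two_pos]
        ring_nf
      rw [hsum', hsumr, hprod, hexp]
    have hpow : ∀ k : ℕ, |if n ≤ k + T then q ^ k * q ^ T * ((k : ℝ) ^ (d 0) * P) else 0| ^ (θ 0)
        = (q ^ T) ^ (θ 0) * P ^ (θ 0) *
          (if M ≤ k then (k : ℝ) ^ (d 0 * θ 0) * x ^ k else 0) := by
      intro k
      by_cases hk : n ≤ k + T
      · rw [if_pos hk, if_pos (by omega : M ≤ k),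
          abs_of_nonneg (by positivity)]
        rw [Real.mul_rpow (by positivity) (by positivity),
          Real.mul_rpow (by positivity) (by positivity),
          Real.mul_rpow (by positivity) hPnn,
          pow_rpow_comm hq0.le, ← Real.rpow_mul (Nat.cast_nonneg k), ← hxdef]
        ring
      · rw [if_neg hk, if_neg (by omega : ¬ M ≤ k), abs_zero,
          Real.zero_rpow hθ0ne, mul_zero]
    have hsumIte : Summable (fun k : ℕ => if M ≤ k then (k : ℝ) ^ (d 0 * θ 0) * x ^ k else 0) :=
      summable_ite_poly hx0 hx1 he0 M
    have htsum : (∑' k : ℕ, |if n ≤ k + T then q ^ k * q ^ T * ((k : ℝ) ^ (d 0) * P) else 0| ^ (θ 0))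
        = (q ^ T) ^ (θ 0) * P ^ (θ 0) *
          ∑' k : ℕ, (if M ≤ k then (k : ℝ) ^ (d 0 * θ 0) * x ^ k else 0) := by
      rw [← tsum_mul_left]
      exact tsum_congr hpow
    have hbound : (∑' k : ℕ, |if n ≤ k + T then q ^ k * q ^ T * ((k : ℝ) ^ (d 0) * P) else 0| ^ (θ 0))
        ≤ (q ^ T) ^ (θ 0) * P ^ (θ 0) * (C0 * ((M : ℝ) + 1) ^ (d 0 * θ 0) * x ^ M) := by
      rw [htsum]
      exact mul_le_mul_of_nonneg_left (hC0 M) (by positivity)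
    -- now rpow 1/θ0
    have hnn1 : 0 ≤ ∑' k : ℕ, |if n ≤ k + T then q ^ k * q ^ T * ((k : ℝ) ^ (d 0) * P) else 0| ^ (θ 0) :=
      tsum_nonneg fun k => Real.rpow_nonneg (abs_nonneg _) _
    have hstep : ((q ^ T) ^ (θ 0) * P ^ (θ 0) * (C0 * ((M : ℝ) + 1) ^ (d 0 * θ 0) * x ^ M)) ^ (1 / θ 0)
        = q ^ T * P * (C0 ^ (1 / θ 0) * ((M : ℝ) + 1) ^ (d 0) * q ^ M) := by
      rw [show x ^ M = (q ^ M) ^ (θ 0) from (pow_rpow_comm hq0.le M (θ 0)).symm]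
      rw [Real.mul_rpow (by positivity) (by positivity),
        Real.mul_rpow (by positivity) (by positivity),
        Real.mul_rpow (by positivity) (by positivity),
        Real.mul_rpow (by positivity) (by positivity),
        ← Real.rpow_mul (by positivity : (0:ℝ) ≤ q ^ T),
        ← Real.rpow_mul (by positivity : (0:ℝ) ≤ P),
        ← Real.rpow_mul (by positivity : (0:ℝ) ≤ (M : ℝ) + 1),
        ← Real.rpow_mul (by positivity : (0:ℝ) ≤ q ^ M),
        mul_one_div_cancel hθ0ne, Real.rpow_one, Real.rpow_one, Real.rpow_one,
        show (d 0 * θ 0) * (1 / θ 0) = d 0 by field_simp]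
      try ring
    have hchain : q ^ T * P * (C0 ^ (1 / θ 0) * ((M : ℝ) + 1) ^ (d 0) * q ^ M) ≤
        K * ∏ j, c j (s j) := by
      have hM2n : ((M : ℝ) + 1) ^ (d 0) ≤ 2 ^ (d 0) * (n : ℝ) ^ (d 0) := by
        rw [← Real.mul_rpow (by norm_num) hn0.le]
        apply Real.rpow_le_rpow (by positivity) ?_ (hd 0)
        have : (M : ℝ) + 1 ≤ 2 * (n : ℝ) := by
          have h : M + 1 ≤ 2 * n := by omega
          exact_mod_cast h
        exact this
      have hTM : q ^ T * q ^ M = q ^ n * q ^ (T - n) := by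
        rw [← pow_add, ← pow_add]
        congr 1
        omega
      have hQP : q ^ (T - n) * P ≤ ∏ j, c j (s j) := by
        have h1 : q ^ (T - n) ≤ ∏ j : Fin m, q ^ (s j - n) := by
          rw [Finset.prod_pow_eq_pow_sum]
          exact pow_le_pow_of_le_one hq0.le hq1.le (sum_tsub Finset.univ s n)
        calc q ^ (T - n) * P ≤ (∏ j : Fin m, q ^ (s j - n)) * P :=
              mul_le_mul_of_nonneg_right h1 hPnn
          _ = ∏ j, c j (s j) := by
              rw [hP, ← Finset.prod_mul_distrib]
              exact Finset.prod_congr rfl fun j _ => by simp only [hcdef]; ring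
      calc q ^ T * P * (C0 ^ (1 / θ 0) * ((M : ℝ) + 1) ^ (d 0) * q ^ M)
          = C0 ^ (1 / θ 0) * ((M : ℝ) + 1) ^ (d 0) * (q ^ T * q ^ M) * P := by ring
        _ = C0 ^ (1 / θ 0) * ((M : ℝ) + 1) ^ (d 0) * q ^ n * (q ^ (T - n) * P) := by
            rw [hTM]; ring
        _ ≤ C0 ^ (1 / θ 0) * (2 ^ (d 0) * (n : ℝ) ^ (d 0)) * q ^ n * (∏ j, c j (s j)) := by
            apply mul_le_mul
            · apply mul_le_mul_of_nonneg_right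
                (mul_le_mul_of_nonneg_left hM2n (by positivity)) (by positivity)
            · exact hQP
            · positivity
            · positivity
        _ = K * ∏ j, c j (s j) := by rw [hKdef]; ring
    rw [abs_of_nonneg (Real.rpow_nonneg
      (tsum_nonneg fun k => Real.rpow_nonneg (abs_nonneg _) _) _)]
    calc (∑' k : ℕ, |if n ≤ ∑ j, (Fin.cons k s : Fin (m+1) → ℕ) j then
          (2 : ℝ) ^ (-(β * ∑ j, ((Fin.cons k s : Fin (m+1) → ℕ) j : ℝ))) *
            ∏ j, ((Fin.cons k s : Fin (m+1) → ℕ) j : ℝ) ^ (d j) else 0| ^ (θ 0)) ^ (1 / θ 0)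
        = (∑' k : ℕ, |if n ≤ k + T then q ^ k * q ^ T * ((k : ℝ) ^ (d 0) * P) else 0| ^ (θ 0)) ^ (1 / θ 0) := by
          congr 1
          exact tsum_congr fun k => by rw [hg k]
      _ ≤ ((q ^ T) ^ (θ 0) * P ^ (θ 0) * (C0 * ((M : ℝ) + 1) ^ (d 0 * θ 0) * x ^ M)) ^ (1 / θ 0) :=
          Real.rpow_le_rpow hnn1 hbound (by positivity)
      _ = q ^ T * P * (C0 ^ (1 / θ 0) * ((M : ℝ) + 1) ^ (d 0) * q ^ M) := hstep
      _ ≤ K * ∏ j, c j (s j) := hchain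
  refine le_trans (mixed_le m (fun j => θ j.succ) (fun j => hθ j.succ) c hcnn hcsum
    K hKnn _ key) ?_
  have hq2 : q ^ n = (2 : ℝ) ^ (-(n : ℝ) * β) := by
    rw [hqdef, ← Real.rpow_natCast ((2:ℝ)^(-β)) n, ← Real.rpow_mul (by norm_num : (0:ℝ) ≤ 2)]
    congr 1
    ring
  have hE : (∑ j, d j) + ∑ j ∈ Finset.univ.erase (0 : Fin (m + 1)), 1 / θ j
      = d 0 + ∑ j : Fin m, (d j.succ + 1 / θ j.succ) := by
    have h1 : (∑ j, d j) = d 0 + ∑ j : Fin m, d j.succ := Fin.sum_univ_succ d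
    have h2 : (∑ j ∈ Finset.univ.erase (0 : Fin (m + 1)), 1 / θ j)
        = ∑ j : Fin m, 1 / θ j.succ := by
      have h3 := Finset.sum_erase_add Finset.univ (fun j => 1 / θ j)
        (Finset.mem_univ (0 : Fin (m + 1)))
      have h4 : (∑ j : Fin (m + 1), 1 / θ j) = 1 / θ 0 + ∑ j : Fin m, 1 / θ j.succ :=
        Fin.sum_univ_succ _
      linarith
    rw [h1, h2, Finset.sum_add_distrib]
    ring
  calc K * ∏ j : Fin m, (∑' k : ℕ, c j k ^ θ j.succ) ^ (1 / θ j.succ)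
      ≤ K * ∏ j : Fin m, (Cf j * (n : ℝ) ^ (d j.succ + 1 / θ j.succ)) := by
        apply mul_le_mul_of_nonneg_left ?_ hKnn
        apply Finset.prod_le_prod
        · intro j _
          exact Real.rpow_nonneg (tsum_nonneg fun k => Real.rpow_nonneg (hcnn j k) _) _
        · intro j _
          exact hCf j n hn
    _ = C0 ^ (1 / θ 0) * 2 ^ (d 0) * (∏ j : Fin m, Cf j) * (2 : ℝ) ^ (-(n : ℝ) * β) *
        (n : ℝ) ^ (∑ j, d j + ∑ j ∈ Finset.univ.erase (0 : Fin (m + 1)), 1 / θ j) := by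
        rw [Finset.prod_mul_distrib, ← rpow_sum' hn0, hE, Real.rpow_add hn0, ← hq2, hKdef]
        ring
end
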